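/- arXiv:1508.02966 — 7 statements merged into one kernel-verified Lean document; each statement's English description precedes it below -/
import Mathlib

section
/- Let a₁,b₁,a₂,b₂,a₃,b₃ be real parameters with 0 ≤ aᵢ < bᵢ for i = 1,2,3 satisfying the ordering condition (Ω). Define the excess terms E₁ := (b₁−a₁)(b₂−a₂)²(b₃−a₃)²(3(b₁b₂a₃ − a₁b₂a₃ + b₁a₂b₃ − a₁a₂b₃) + 2(a₁b₂b₃ − b₁a₂a₃))/(24(b₂b₃−a₂a₃)), E₂ := (b₁−a₁)(b₂−a₂)²(b₃−a₃)²(5(a₁b₁b₃ − a₁b₁a₃) + 3(b₁²a₃ − a₁²b₃))/(24(b₁b₃−a₁a₃)), and E₃ := (b₁−a₁)(b₂−a₂)²(b₃−a₃)²(5(a₁b₁b₂ − a₁b₁a₂) + 3(b₁²a₂ − a₁²b₂))/(24(b₁b₂−a₁a₂)). Then 0 ≤ E₃ ≤ E₂ ≤ E₁ (so that Vol 𝒫_H ≤ Vol 𝒫₃ ≤ Vol 𝒫₂ ≤ Vol 𝒫₁). -/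
/-!
Write `Eₖ = C · Nₖ / Dₖ` with the common factor `C = (b₁-a₁)(b₂-a₂)²(b₃-a₃)² ≥ 0` and positive
denominators `Dₖ`. After cross-multiplying, the two comparisons factor as
`N₂D₃ - N₃D₂ = 24 (b₂a₃ - a₂b₃)(b₁-a₁)(3b₁² - 2a₁b₁ + 3a₁²)` and
`N₁D₂ - N₂D₁ = 24 (b₁a₂ - a₁b₂)(b₁-a₁)(3b₃² - 2a₃b₃ + 3a₃²)`,
while the two halves of (Ω) are `(b₁a₂ - a₁b₂)(b₃-a₃) ≥ 0` and `(b₂a₃ - a₂b₃)(b₁-a₁) ≥ 0`.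
-/

lemma mul_div_le_mul_div_of_mul_le_mul {α : Type*} [Field α] [LinearOrder α]
    [IsStrictOrderedRing α] {c n n' d d' : α} (hc : 0 ≤ c) (hd : 0 < d) (hd' : 0 < d')
    (h : n * d' ≤ n' * d) : c * n / d ≤ c * n' / d' := by
  rw [mul_div_assoc, mul_div_assoc]
  exact mul_le_mul_of_nonneg_left ((div_le_div_iff₀ hd hd').2 h) hc

lemma three_sq_sub_two_mul_add_three_sq_nonneg (a b : ℝ) : 0 ≤ 3*b^2 - 2*a*b + 3*a^2 := by
  nlinarith [sq_nonneg (a - b), sq_nonneg a, sq_nonneg b]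

lemma excess_numerator₃_nonneg {a₁ b₁ a₂ b₂ : ℝ} (ha₁ : 0 ≤ a₁) (hab₁ : a₁ ≤ b₁)
    (ha₂ : 0 ≤ a₂) (hab₂ : a₂ ≤ b₂) :
    0 ≤ 5*(a₁*b₁*b₂ - a₁*b₁*a₂) + 3*(b₁^2*a₂ - a₁^2*b₂) := by
  have h₁ : 0 ≤ (b₂ - a₂) * a₁ * (5*b₁ - 3*a₁) := by
    have : 0 ≤ 5*b₁ - 3*a₁ := by linarith
    have := sub_nonneg.2 hab₂
    positivity
  have h₂ : 0 ≤ 3 * a₂ * (b₁ - a₁) * (b₁ + a₁) := by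
    have := sub_nonneg.2 hab₁
    have : 0 ≤ b₁ + a₁ := by linarith
    positivity
  linear_combination h₁ + h₂

lemma excess₃_le_excess₂_cross {a₁ b₁ a₂ b₂ a₃ b₃ : ℝ} (hab₁ : a₁ ≤ b₁) (h : a₂*b₃ ≤ b₂*a₃) :
    (5*(a₁*b₁*b₂ - a₁*b₁*a₂) + 3*(b₁^2*a₂ - a₁^2*b₂)) * (24*(b₁*b₃ - a₁*a₃))
      ≤ (5*(a₁*b₁*b₃ - a₁*b₁*a₃) + 3*(b₁^2*a₃ - a₁^2*b₃)) * (24*(b₁*b₂ - a₁*a₂)) := by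
  have := mul_nonneg (mul_nonneg (sub_nonneg.2 h) (sub_nonneg.2 hab₁))
    (three_sq_sub_two_mul_add_three_sq_nonneg a₁ b₁)
  linear_combination 24 * this

lemma excess₂_le_excess₁_cross {a₁ b₁ a₂ b₂ a₃ b₃ : ℝ} (hab₁ : a₁ ≤ b₁) (h : a₁*b₂ ≤ b₁*a₂) :
    (5*(a₁*b₁*b₃ - a₁*b₁*a₃) + 3*(b₁^2*a₃ - a₁^2*b₃)) * (24*(b₂*b₃ - a₂*a₃))
      ≤ (3*(b₁*b₂*a₃ - a₁*b₂*a₃ + b₁*a₂*b₃ - a₁*a₂*b₃) + 2*(a₁*b₂*b₃ - b₁*a₂*a₃))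
        * (24*(b₁*b₃ - a₁*a₃)) := by
  have := mul_nonneg (mul_nonneg (sub_nonneg.2 h) (sub_nonneg.2 hab₁))
    (three_sq_sub_two_mul_add_three_sq_nonneg a₃ b₃)
  linear_combination 24 * this

lemma excess_denominator_pos {a b c d : ℝ} (ha : 0 ≤ a) (hab : a < b) (hc : 0 ≤ c) (hcd : c < d) :
    0 < 24*(b*d - a*c) := by
  have := mul_lt_mul'' hab hcd ha hc
  linarith

/-- Corollary 1 of Speakman–Lee: the excess-volume terms of the three
double-McCormick relaxations over the trilinear hull satisfy
`0 ≤ E₃ ≤ E₂ ≤ E₁`, so `Vol 𝒫_H ≤ Vol 𝒫₃ ≤ Vol 𝒫₂ ≤ Vol 𝒫₁`. -/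
theorem excess_volume_ordering
    (a₁ b₁ a₂ b₂ a₃ b₃ : ℝ)
    (ha₁ : 0 ≤ a₁) (hab₁ : a₁ < b₁)
    (ha₂ : 0 ≤ a₂) (hab₂ : a₂ < b₂)
    (ha₃ : 0 ≤ a₃) (hab₃ : a₃ < b₃)
    (hΩ₁ : a₁*b₂*b₃ + b₁*a₂*a₃ ≤ b₁*a₂*b₃ + a₁*b₂*a₃)
    (hΩ₂ : b₁*a₂*b₃ + a₁*b₂*a₃ ≤ b₁*b₂*a₃ + a₁*a₂*b₃) :
    let E₁ := (b₁-a₁)*(b₂-a₂)^2*(b₃-a₃)^2 *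
      (3*(b₁*b₂*a₃ - a₁*b₂*a₃ + b₁*a₂*b₃ - a₁*a₂*b₃) + 2*(a₁*b₂*b₃ - b₁*a₂*a₃))
        / (24*(b₂*b₃ - a₂*a₃))
    let E₂ := (b₁-a₁)*(b₂-a₂)^2*(b₃-a₃)^2 *
      (5*(a₁*b₁*b₃ - a₁*b₁*a₃) + 3*(b₁^2*a₃ - a₁^2*b₃)) / (24*(b₁*b₃ - a₁*a₃))
    let E₃ := (b₁-a₁)*(b₂-a₂)^2*(b₃-a₃)^2 *
      (5*(a₁*b₁*b₂ - a₁*b₁*a₂) + 3*(b₁^2*a₂ - a₁^2*b₂)) / (24*(b₁*b₂ - a₁*a₂))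
    0 ≤ E₃ ∧ E₃ ≤ E₂ ∧ E₂ ≤ E₁ := by
  intro E₁ E₂ E₃
  have hC : 0 ≤ (b₁-a₁)*(b₂-a₂)^2*(b₃-a₃)^2 := by
    have := sub_nonneg.2 hab₁.le
    positivity
  have hD₁ := excess_denominator_pos ha₂ hab₂ ha₃ hab₃
  have hD₂ := excess_denominator_pos ha₁ hab₁ ha₃ hab₃
  have hD₃ := excess_denominator_pos ha₁ hab₁ ha₂ hab₂
  have hΩ₁' : a₁*b₂ ≤ b₁*a₂ :=
    le_of_mul_le_mul_right (by linear_combination hΩ₁) (sub_pos.2 hab₃)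
  have hΩ₂' : a₂*b₃ ≤ b₂*a₃ :=
    le_of_mul_le_mul_right (by linear_combination hΩ₂) (sub_pos.2 hab₁)
  exact ⟨div_nonneg (mul_nonneg hC (excess_numerator₃_nonneg ha₁ hab₁.le ha₂ hab₂.le)) hD₃.le,
    mul_div_le_mul_div_of_mul_le_mul hC hD₃ hD₂ (excess₃_le_excess₂_cross hab₁.le hΩ₂'),
    mul_div_le_mul_div_of_mul_le_mul hC hD₂ hD₁ (excess₂_le_excess₁_cross hab₁.le hΩ₁')⟩
end

section
/- Let a₃,b₃ be real parameters with 0 ≤ a₃ < b₃, and set a₁ = a₂ = 0 and b₁ = b₂ = 1 (two binary variables and one continuous variable). Then the excess terms satisfy E₃ = 0 and E₁ = E₂ = 3a₃(b₃−a₃)²/(24b₃); that is, grouping the two binary variables first gives a double-McCormick relaxation whose volume equals that of the trilinear hull, while the other two groupings each exceed it by 3a₃(b₃−a₃)²/(24b₃). -/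
theorem excess_volume_two_binary_general
    (a₁ b₁ a₂ b₂ a₃ b₃ : ℝ)
    (ha₁ : a₁ = 0) (hb₁ : b₁ = 1) (ha₂ : a₂ = 0) (hb₂ : b₂ = 1) :
    let E₁ := (b₁-a₁)*(b₂-a₂)^2*(b₃-a₃)^2 *
      (3*(b₁*b₂*a₃ - a₁*b₂*a₃ + b₁*a₂*b₃ - a₁*a₂*b₃) + 2*(a₁*b₂*b₃ - b₁*a₂*a₃))
        / (24*(b₂*b₃ - a₂*a₃))
    let E₂ := (b₁-a₁)*(b₂-a₂)^2*(b₃-a₃)^2 *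
      (5*(a₁*b₁*b₃ - a₁*b₁*a₃) + 3*(b₁^2*a₃ - a₁^2*b₃)) / (24*(b₁*b₃ - a₁*a₃))
    let E₃ := (b₁-a₁)*(b₂-a₂)^2*(b₃-a₃)^2 *
      (5*(a₁*b₁*b₂ - a₁*b₁*a₂) + 3*(b₁^2*a₂ - a₁^2*b₂)) / (24*(b₁*b₂ - a₁*a₂))
    E₃ = 0 ∧ E₁ = 3*a₃*(b₃-a₃)^2/(24*b₃) ∧ E₂ = 3*a₃*(b₃-a₃)^2/(24*b₃) := by
  subst ha₁ hb₁ ha₂ hb₂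
  exact ⟨by ring, by ring, by ring⟩

/-- Corollary 2 of Speakman–Lee: in the special case of two binary variables
(`a₁ = a₂ = 0`, `b₁ = b₂ = 1`) and one continuous variable `x₃ ∈ [a₃, b₃]`,
the excess-volume term of the grouping of the two binary variables vanishes
(`E₃ = 0`, i.e. `𝒫₃` has the volume of the trilinear hull), while the other
two groupings each exceed the hull volume by `3a₃(b₃−a₃)²/(24b₃)`. -/
theorem excess_volume_two_binary
    (a₁ b₁ a₂ b₂ a₃ b₃ : ℝ)
    (ha₁ : a₁ = 0) (hb₁ : b₁ = 1) (ha₂ : a₂ = 0) (hb₂ : b₂ = 1)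
    (ha₃ : 0 ≤ a₃) (hab₃ : a₃ < b₃) :
    let E₁ := (b₁-a₁)*(b₂-a₂)^2*(b₃-a₃)^2 *
      (3*(b₁*b₂*a₃ - a₁*b₂*a₃ + b₁*a₂*b₃ - a₁*a₂*b₃) + 2*(a₁*b₂*b₃ - b₁*a₂*a₃))
        / (24*(b₂*b₃ - a₂*a₃))
    let E₂ := (b₁-a₁)*(b₂-a₂)^2*(b₃-a₃)^2 *
      (5*(a₁*b₁*b₃ - a₁*b₁*a₃) + 3*(b₁^2*a₃ - a₁^2*b₃)) / (24*(b₁*b₃ - a₁*a₃))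
    let E₃ := (b₁-a₁)*(b₂-a₂)^2*(b₃-a₃)^2 *
      (5*(a₁*b₁*b₂ - a₁*b₁*a₂) + 3*(b₁^2*a₂ - a₁^2*b₂)) / (24*(b₁*b₂ - a₁*a₂))
    E₃ = 0 ∧ E₁ = 3*a₃*(b₃-a₃)^2/(24*b₃) ∧ E₂ = 3*a₃*(b₃-a₃)^2/(24*b₃) :=
  excess_volume_two_binary_general a₁ b₁ a₂ b₂ a₃ b₃ ha₁ hb₁ ha₂ hb₂
end

section
/- Let P be a convex set in a real vector space and let w₁ and w₂ be points not in P. If the line segment between w₁ and w₂ intersects P (i.e., segment[w₁, w₂] ∩ P ≠ ∅), then conv(P ∪ {w₁}) ∪ conv(P ∪ {w₂}) is convex, and moreover conv(P ∪ {w₁, w₂}) = conv(P ∪ {w₁}) ∪ conv(P ∪ {w₂}). -/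
/-!
The hull `conv(P ∪ {w₁, w₂})` is the join of `conv P` with `segment[w₁, w₂]`. A point `m` of `P` on
that segment cuts it into `segment[w₁, m] ∪ segment[m, w₂]`, so the join splits into the joins of
`conv P` with the two halves, and the join with `segment[wᵢ, m]` lies in `conv(P ∪ {wᵢ})` because
`m ∈ P`. The union is then itself a convex hull, hence convex.
-/

open Set

theorem segment_union_segment {𝕜 E : Type*} [Field 𝕜] [LinearOrder 𝕜] [IsStrictOrderedRing 𝕜]
    [AddCommGroup E] [Module 𝕜 E] {x y z : E} (hy : y ∈ segment 𝕜 x z) :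
    segment 𝕜 x y ∪ segment 𝕜 y z = segment 𝕜 x z := by
  refine subset_antisymm (union_subset ?_ ?_) fun u hu ↦ ?_
  · exact (convex_segment x z).segment_subset (left_mem_segment 𝕜 x z) hy
  · exact (convex_segment x z).segment_subset hy (right_mem_segment 𝕜 x z)
  rw [mem_segment_iff_wbtw] at hy hu
  rw [mem_union, mem_segment_iff_wbtw, mem_segment_iff_wbtw]
  obtain ⟨r, ⟨hr, -⟩, rfl⟩ := hy
  obtain ⟨t, ⟨ht, -⟩, rfl⟩ := id hu
  rw [AffineMap.lineMap_apply] at hu ⊢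
  rcases wbtw_or_wbtw_smul_vadd_of_nonneg x (z -ᵥ x) hr ht with hyu | huy
  · exact Or.inr (hu.trans_left_right hyu)
  · exact Or.inl huy

theorem convexJoin_convexHull_segment_subset {𝕜 E : Type*} [Semiring 𝕜] [PartialOrder 𝕜]
    [IsOrderedRing 𝕜] [AddCommMonoid E] [Module 𝕜 E] {s : Set E} {x z : E}
    (hz : z ∈ convexHull 𝕜 s) :
    convexJoin 𝕜 (convexHull 𝕜 s) (segment 𝕜 x z) ⊆ convexHull 𝕜 (s ∪ {x}) :=
  convexJoin_subset (convexHull_mono subset_union_left)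
    ((convex_convexHull 𝕜 _).segment_subset (subset_convexHull 𝕜 _ (Or.inr rfl))
      (convexHull_mono subset_union_left hz))
    (convex_convexHull 𝕜 _)

theorem convexHull_union_pair_eq_union_of_mem_segment {𝕜 E : Type*} [Field 𝕜] [LinearOrder 𝕜]
    [IsStrictOrderedRing 𝕜] [AddCommGroup E] [Module 𝕜 E] {s : Set E} {x y z : E}
    (hz : z ∈ convexHull 𝕜 s) (hzxy : z ∈ segment 𝕜 x y) :
    convexHull 𝕜 (s ∪ {x, y}) = convexHull 𝕜 (s ∪ {x}) ∪ convexHull 𝕜 (s ∪ {y}) := by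
  have hs : s.Nonempty := convexHull_nonempty_iff.mp ⟨z, hz⟩
  refine subset_antisymm ?_ (union_subset (convexHull_mono ?_) (convexHull_mono ?_))
  · calc convexHull 𝕜 (s ∪ {x, y})
        = convexJoin 𝕜 (convexHull 𝕜 s) (segment 𝕜 x y) := by
          rw [convexHull_union hs (insert_nonempty x {y}), convexHull_pair]
      _ = convexJoin 𝕜 (convexHull 𝕜 s) (segment 𝕜 x z) ∪
            convexJoin 𝕜 (convexHull 𝕜 s) (segment 𝕜 y z) := by
          rw [← segment_union_segment hzxy, convexJoin_union_right, segment_symm 𝕜 z y]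
      _ ⊆ convexHull 𝕜 (s ∪ {x}) ∪ convexHull 𝕜 (s ∪ {y}) :=
          union_subset_union (convexJoin_convexHull_segment_subset hz)
            (convexJoin_convexHull_segment_subset hz)
  · exact union_subset_union_right s (by simp)
  · exact union_subset_union_right s (by simp)

theorem convexHull_union_of_segment_inter_general
    {V : Type*} [AddCommGroup V] [Module ℝ V]
    (P : Set V)
    (w₁ w₂ : V)
    (hseg : (segment ℝ w₁ w₂ ∩ P).Nonempty) :
    Convex ℝ (convexHull ℝ (P ∪ {w₁}) ∪ convexHull ℝ (P ∪ {w₂})) ∧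
    convexHull ℝ (P ∪ {w₁, w₂})
      = convexHull ℝ (P ∪ {w₁}) ∪ convexHull ℝ (P ∪ {w₂}) := by
  obtain ⟨m, hm_seg, hm_P⟩ := hseg
  have h := convexHull_union_pair_eq_union_of_mem_segment (subset_convexHull ℝ P hm_P) hm_seg
  exact ⟨h ▸ convex_convexHull ℝ _, h⟩

/-- Lemma 1 of Speakman–Lee: if `P` is a convex set, `w₁, w₂ ∉ P`, and the
segment between `w₁` and `w₂` meets `P`, then `conv(P ∪ {w₁}) ∪ conv(P ∪ {w₂})`
is convex and equals `conv(P ∪ {w₁, w₂})`. -/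
theorem convexHull_union_of_segment_inter
    {V : Type*} [AddCommGroup V] [Module ℝ V]
    (P : Set V) (hP : Convex ℝ P)
    (w₁ w₂ : V) (hw₁ : w₁ ∉ P) (hw₂ : w₂ ∉ P)
    (hseg : (segment ℝ w₁ w₂ ∩ P).Nonempty) :
    Convex ℝ (convexHull ℝ (P ∪ {w₁}) ∪ convexHull ℝ (P ∪ {w₂})) ∧
    convexHull ℝ (P ∪ {w₁, w₂})
      = convexHull ℝ (P ∪ {w₁}) ∪ convexHull ℝ (P ∪ {w₂}) :=
  convexHull_union_of_segment_inter_general P w₁ w₂ hseg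
end

section
/- Let a₁,b₁,a₂,b₂,a₃,b₃ be real parameters with 0 ≤ aᵢ < bᵢ for i = 1,2,3. Then the 4-dimensional Lebesgue volume of the simplex 𝒮 := conv{v¹, v², v⁴, v⁵, v⁶} in ℝ⁴ equals (b₁−a₁)²(b₂−a₂)(b₃−a₃)(b₂b₃−a₂a₃)/24. -/
/-!
The unit cube `[0,1]ⁿ` is the union of the `n!` order simplices `{x | x (σ 0) ≤ ⋯ ≤ x (σ (n-1))}`.
They are images of one another under coordinate permutations and overlap only where two
coordinates agree, a null set, so each has volume `1/n!`. For `n = 4` the order simplex is the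
convex hull of the staircase `0, e₃, e₂ + e₃, e₁ + e₂ + e₃, 𝟙`, and the affine map `x ↦ v¹ + M x`,
with `M` the matrix of the edges `v⁶ - v⁵, v⁵ - v⁴, v⁴ - v², v² - v¹`, sends these vertices to
`v¹, v², v⁴, v⁵, v⁶`. Hence `vol 𝒮 = |det M| / 24`, and
`det M = (b₁ - a₁)²(b₂ - a₂)(b₃ - a₃)(b₂b₃ - a₂a₃)`.
-/

open MeasureTheory Set Pointwise

def orderSimplex (n : ℕ) : Set (Fin n → ℝ) :=
  {x | x ∈ Icc 0 1 ∧ Monotone x}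

theorem volume_setOf_not_injective {ι : Type*} [Fintype ι] :
    volume {x : ι → ℝ | ¬ Function.Injective x} = 0 := by
  classical
  have hsub : {x : ι → ℝ | ¬ Function.Injective x} ⊆
      ⋃ (i : ι) (j : ι) (_ : i ≠ j),
        (LinearMap.ker (LinearMap.proj (R := ℝ) (φ := fun _ : ι => ℝ) i - LinearMap.proj j) :
          Set (ι → ℝ)) := by
    intro x hx
    simp only [Function.Injective, not_forall] at hx
    obtain ⟨i, j, hij, hne⟩ := hx
    simp only [mem_iUnion, SetLike.mem_coe, LinearMap.mem_ker]
    exact ⟨i, j, hne, by simp [hij]⟩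
  refine measure_mono_null hsub (measure_iUnion_null fun i => measure_iUnion_null fun j =>
    measure_iUnion_null fun hij => Measure.addHaar_submodule _ _ fun htop => ?_)
  have := LinearMap.congr_fun (LinearMap.ker_eq_top.1 htop) (Pi.single i 1)
  simp [Ne.symm hij] at this

theorem comp_perm_mem_Icc_iff {ι : Type*} {σ : Equiv.Perm ι} {x : ι → ℝ} :
    x ∘ σ ∈ Icc 0 1 ↔ x ∈ Icc 0 1 := by
  simp only [mem_Icc, Pi.le_def, Function.comp_apply, Pi.zero_apply, Pi.one_apply]
  rw [σ.forall_congr_right (q := fun i => 0 ≤ x i), σ.forall_congr_right (q := fun i => x i ≤ 1)]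

section orderSimplex

variable {n : ℕ}

theorem isClosed_orderSimplex : IsClosed (orderSimplex n) :=
  isClosed_Icc.inter isClosed_monotone

theorem convex_orderSimplex : Convex ℝ (orderSimplex n) := by
  refine (convex_Icc 0 1).inter fun x (hx : Monotone x) y (hy : Monotone y) a b ha hb _ => ?_
  exact (hx.const_smul ha).add (hy.const_smul hb)

theorem volume_preimage_comp_perm_orderSimplex (σ : Equiv.Perm (Fin n)) :
    volume ((· ∘ σ) ⁻¹' orderSimplex n) = volume (orderSimplex n) := by
  have hσ : (MeasurableEquiv.piCongrLeft (fun _ => ℝ) σ.symm : (Fin n → ℝ) → Fin n → ℝ) =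
      (· ∘ σ) := by
    ext x i
    simp [MeasurableEquiv.coe_piCongrLeft, Equiv.piCongrLeft_apply]
  rw [← hσ]
  exact (volume_measurePreserving_piCongrLeft _ σ.symm).measure_preimage
    isClosed_orderSimplex.measurableSet.nullMeasurableSet

theorem iUnion_preimage_comp_perm_orderSimplex :
    ⋃ σ : Equiv.Perm (Fin n), (· ∘ σ) ⁻¹' orderSimplex n = Icc 0 1 := by
  refine Subset.antisymm (iUnion_subset fun σ x hx => comp_perm_mem_Icc_iff.1 hx.1) fun x hx => ?_
  exact mem_iUnion.2 ⟨Tuple.sort x, comp_perm_mem_Icc_iff.2 hx, Tuple.monotone_sort x⟩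

theorem pairwise_aedisjoint_preimage_comp_perm_orderSimplex :
    Pairwise fun σ τ : Equiv.Perm (Fin n) =>
      AEDisjoint volume ((· ∘ σ) ⁻¹' orderSimplex n) ((· ∘ τ) ⁻¹' orderSimplex n) := by
  intro σ τ hστ
  refine measure_mono_null (fun x hx (hinj : Function.Injective x) => hστ ?_) volume_setOf_not_injective
  exact Equiv.ext fun i => hinj (congr_fun (Tuple.unique_monotone hx.1.2 hx.2.2) i)

theorem volume_orderSimplex : volume (orderSimplex n) = (n.factorial : ENNReal)⁻¹ := by
  have hcube : volume (Icc (0 : Fin n → ℝ) 1) = 1 := by simp [Real.volume_Icc_pi]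
  rw [← iUnion_preimage_comp_perm_orderSimplex,
    measure_iUnion₀ pairwise_aedisjoint_preimage_comp_perm_orderSimplex fun σ =>
      (isClosed_orderSimplex.preimage (by fun_prop)).measurableSet.nullMeasurableSet,
    tsum_fintype] at hcube
  simp only [volume_preimage_comp_perm_orderSimplex, Finset.sum_const, Finset.card_univ,
    Fintype.card_perm, Fintype.card_fin, nsmul_eq_mul] at hcube
  exact ENNReal.eq_inv_of_mul_eq_one_left (by rwa [mul_comm])

end orderSimplex

theorem mem_orderSimplex_four {x : Fin 4 → ℝ} :
    x ∈ orderSimplex 4 ↔ 0 ≤ x 0 ∧ x 0 ≤ x 1 ∧ x 1 ≤ x 2 ∧ x 2 ≤ x 3 ∧ x 3 ≤ 1 := by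
  simp only [orderSimplex, mem_ofPred_eq, mem_Icc, Pi.le_def, Pi.zero_apply, Pi.one_apply,
    Fin.monotone_iff_le_succ, Fin.forall_fin_succ, IsEmpty.forall_iff, and_true, Fin.isValue,
    Fin.succ_zero_eq_one, Fin.succ_one_eq_two, Fin.reduceSucc, Fin.castSucc_zero, Fin.castSucc_succ,
    Nat.reduceAdd]
  constructor
  · rintro ⟨⟨⟨h0, -⟩, -, -, -, h3⟩, h01, h12, h23⟩
    exact ⟨h0, h01, h12, h23, h3⟩
  · rintro ⟨h0, h01, h12, h23, h3⟩
    refine ⟨⟨⟨h0, ?_, ?_, ?_⟩, ?_, ?_, ?_, h3⟩, h01, h12, h23⟩ <;> linarith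

def staircase : Set (Fin 4 → ℝ) :=
  {![0, 0, 0, 0], ![0, 0, 0, 1], ![0, 0, 1, 1], ![0, 1, 1, 1], ![1, 1, 1, 1]}

theorem convexHull_staircase : convexHull ℝ staircase = orderSimplex 4 := by
  refine Subset.antisymm (convexHull_min ?_ convex_orderSimplex) fun x hx => ?_
  · simp [staircase, insert_subset_iff, mem_orderSimplex_four]
  · obtain ⟨h0, h01, h12, h23, h3⟩ := mem_orderSimplex_four.1 hx
    have hbary : x = ∑ k : Fin 5, ![1 - x 3, x 3 - x 2, x 2 - x 1, x 1 - x 0, x 0] k •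
        ![![0, 0, 0, 0], ![0, 0, 0, 1], ![0, 0, 1, 1], ![0, 1, 1, 1], ![1, 1, 1, 1]] k := by
      ext i
      fin_cases i <;> simp [Fin.sum_univ_five]
    rw [hbary]
    refine (convex_convexHull ℝ _).sum_mem (fun k _ => ?_) ?_ fun k _ => subset_convexHull ℝ _ ?_
    · fin_cases k <;> simp <;> linarith
    · simp [Fin.sum_univ_five]
    · fin_cases k <;> simp [staircase]

def simplexEdgeMatrix (a₁ b₁ a₂ b₂ a₃ b₃ : ℝ) : Matrix (Fin 4) (Fin 4) ℝ :=
  !![(b₁ - a₁) * b₂ * b₃, a₁ * b₂ * (b₃ - a₃), a₁ * (b₂ - a₂) * a₃, (a₁ - b₁) * a₂ * a₃;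
     b₁ - a₁, 0, 0, a₁ - b₁;
     0, 0, b₂ - a₂, 0;
     0, b₃ - a₃, 0, 0]

theorem det_simplexEdgeMatrix (a₁ b₁ a₂ b₂ a₃ b₃ : ℝ) :
    (simplexEdgeMatrix a₁ b₁ a₂ b₂ a₃ b₃).det =
      (b₁ - a₁) ^ 2 * (b₂ - a₂) * (b₃ - a₃) * (b₂ * b₃ - a₂ * a₃) := by
  simp [simplexEdgeMatrix, Matrix.det_succ_row_zero, Fin.sum_univ_succ, Fin.succAbove]
  ring

theorem vadd_image_staircase (a₁ b₁ a₂ b₂ a₃ b₃ : ℝ) :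
    ![b₁ * a₂ * a₃, b₁, a₂, a₃] +ᵥ Matrix.toLin' (simplexEdgeMatrix a₁ b₁ a₂ b₂ a₃ b₃) '' staircase =
      {![b₁*a₂*a₃, b₁, a₂, a₃], ![a₁*a₂*a₃, a₁, a₂, a₃], ![a₁*b₂*a₃, a₁, b₂, a₃],
        ![a₁*b₂*b₃, a₁, b₂, b₃], ![b₁*b₂*b₃, b₁, b₂, b₃]} := by
  simp only [staircase, image_insert_eq, image_singleton, vadd_set_insert, vadd_set_singleton]
  refine congr_arg₂ insert ?_ <| congr_arg₂ insert ?_ <| congr_arg₂ insert ?_ <|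
    congr_arg₂ insert ?_ <| congr_arg singleton ?_ <;>
  ext i <;> fin_cases i <;> simp [simplexEdgeMatrix] <;> ring

theorem volume_simplex_S_general
    (a₁ b₁ a₂ b₂ a₃ b₃ : ℝ)
    (ha₂ : 0 ≤ a₂) (hab₂ : a₂ < b₂)
    (ha₃ : 0 ≤ a₃) (hab₃ : a₃ < b₃) :
    volume (convexHull ℝ
      ({![b₁*a₂*a₃, b₁, a₂, a₃], ![a₁*a₂*a₃, a₁, a₂, a₃], ![a₁*b₂*a₃, a₁, b₂, a₃],
        ![a₁*b₂*b₃, a₁, b₂, b₃], ![b₁*b₂*b₃, b₁, b₂, b₃]} : Set (Fin 4 → ℝ)))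
      = ENNReal.ofReal
          ((b₁-a₁)^2*(b₂-a₂)*(b₃-a₃)*(b₂*b₃-a₂*a₃) / 24) := by
  have hdet : 0 ≤ (b₁-a₁)^2*(b₂-a₂)*(b₃-a₃)*(b₂*b₃-a₂*a₃) := by
    have h₂ := sub_nonneg.2 hab₂.le
    have h₃ := sub_nonneg.2 hab₃.le
    have h₂₃ := sub_nonneg.2 (mul_le_mul hab₂.le hab₃.le ha₃ (ha₂.trans hab₂.le))
    positivity
  rw [← vadd_image_staircase, convexHull_vadd, ← LinearMap.image_convexHull, convexHull_staircase,
    measure_vadd, Measure.addHaar_image_linearMap, LinearMap.det_toLin', det_simplexEdgeMatrix,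
    volume_orderSimplex, abs_of_nonneg hdet, ENNReal.ofReal_div_of_pos (by norm_num)]
  norm_num [Nat.factorial, div_eq_mul_inv]

/-- The 4-dimensional volume of the simplex `𝒮 = conv{v¹, v², v⁴, v⁵, v⁶}`
used in the triangulation of the trilinear hull by Speakman–Lee. -/
theorem volume_simplex_S
    (a₁ b₁ a₂ b₂ a₃ b₃ : ℝ)
    (ha₁ : 0 ≤ a₁) (hab₁ : a₁ < b₁)
    (ha₂ : 0 ≤ a₂) (hab₂ : a₂ < b₂)
    (ha₃ : 0 ≤ a₃) (hab₃ : a₃ < b₃) :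
    volume (convexHull ℝ
      ({![b₁*a₂*a₃, b₁, a₂, a₃], ![a₁*a₂*a₃, a₁, a₂, a₃], ![a₁*b₂*a₃, a₁, b₂, a₃],
        ![a₁*b₂*b₃, a₁, b₂, b₃], ![b₁*b₂*b₃, b₁, b₂, b₃]} : Set (Fin 4 → ℝ)))
      = ENNReal.ofReal
          ((b₁-a₁)^2*(b₂-a₂)*(b₃-a₃)*(b₂*b₃-a₂*a₃) / 24) :=
  volume_simplex_S_general a₁ b₁ a₂ b₂ a₃ b₃ ha₂ hab₂ ha₃ hab₃
end

section
/- Let a₁,b₁,a₂,b₂,a₃,b₃ be real parameters with 0 ≤ aᵢ < bᵢ for i = 1,2,3 satisfying the ordering condition (Ω). Then the 4-dimensional Lebesgue volume of 𝒬 := conv{v¹, v², v⁴, v⁵, v⁶, v⁸} in ℝ⁴ equals (b₁−a₁)²(b₂−a₂)(b₃−a₃)(b₂b₃−a₂a₃)/12. -/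
open MeasureTheory Set Pointwise

/-!
𝒬 is the union of the two 4-simplices conv{v⁴, v¹, v², v⁵, v⁶} and conv{v⁸, v¹, v², v⁵, v⁶}:
by the first inequality of (Ω) the midpoint of v⁴v⁸ lies in conv{v¹, v², v⁵, v⁶}, and a point of
the segment v⁴v⁸ lies on the v⁴-side or on the v⁸-side of that midpoint. The two simplices lie on
opposite sides of a hyperplane through v¹, v², v⁵, v⁶, so their volumes add, and each has volume
|det|/4! = (b₁-a₁)²(b₂-a₂)(b₃-a₃)(b₂b₃-a₂a₃)/24. The 1/n! in the volume of a simplex comes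
from slicing the corner simplex {x ≥ 0, ∑ xᵢ ≤ c} along its first coordinate.
-/

def cornerSimplex (ι : Type*) [Fintype ι] (c : ℝ) : Set (ι → ℝ) :=
  {x | (∀ i, 0 ≤ x i) ∧ ∑ i, x i ≤ c}

section
variable {ι : Type*} [Fintype ι]

theorem isClosed_cornerSimplex (c : ℝ) : IsClosed (cornerSimplex ι c) := by
  simp only [cornerSimplex, ofPred_and, ofPred_forall]
  exact (isClosed_iInter fun i => isClosed_le continuous_const (continuous_apply i)).inter
    (isClosed_le (by fun_prop) continuous_const)

theorem cornerSimplex_eq_empty {c : ℝ} (hc : c < 0) : cornerSimplex ι c = ∅ :=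
  eq_empty_of_forall_notMem fun _ hx =>
    ((Finset.sum_nonneg fun i _ => hx.1 i).trans hx.2).not_gt hc

theorem convex_cornerSimplex (c : ℝ) : Convex ℝ (cornerSimplex ι c) := by
  rintro x ⟨hx0, hxc⟩ y ⟨hy0, hyc⟩ a b ha hb hab
  refine ⟨fun i => ?_, ?_⟩
  · exact add_nonneg (mul_nonneg ha (hx0 i)) (mul_nonneg hb (hy0 i))
  · calc ∑ i, (a • x + b • y) i = a * ∑ i, x i + b * ∑ i, y i := by
          simp [Finset.sum_add_distrib, Finset.mul_sum]
      _ ≤ a * c + b * c := by gcongr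
      _ = c := by rw [← add_mul, hab, one_mul]

theorem convexHull_insert_zero_range_single [DecidableEq ι] :
    convexHull ℝ (insert 0 (range fun i => Pi.single i 1)) = cornerSimplex ι 1 := by
  refine (convexHull_min ?_ (convex_cornerSimplex 1)).antisymm fun x ⟨hx0, hx1⟩ => ?_
  · rintro _ (rfl | ⟨i, rfl⟩)
    · exact ⟨fun _ => le_rfl, by simp⟩
    · exact ⟨fun j => by simp only [Pi.single_apply]; split_ifs <;> norm_num, by simp⟩
  · let w : Option ι → ℝ := fun o => o.elim (1 - ∑ i, x i) x
    let z : Option ι → ι → ℝ := fun o => o.elim 0 fun i => Pi.single i 1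
    have hw : ∀ o ∈ Finset.univ, 0 ≤ w o := by
      rintro (_ | i) _
      · simpa [w] using hx1
      · exact hx0 i
    have hz : ∀ o ∈ Finset.univ, z o ∈ insert 0 (range fun i => Pi.single i (1 : ℝ)) := by
      rintro (_ | i) _
      · exact mem_insert _ _
      · exact mem_insert_of_mem _ ⟨i, rfl⟩
    convert (convex_convexHull ℝ _).sum_mem hw (by simp [w, Fintype.sum_option])
      fun o ho => subset_convexHull ℝ _ (hz o ho)
    ext j
    simp [w, z, Fintype.sum_option, Pi.single_apply]

end

theorem integral_sub_pow_div_factorial (n : ℕ) (c : ℝ) :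
    ∫ t in (0 : ℝ)..c, (c - t) ^ n / n.factorial = c ^ (n + 1) / (n + 1).factorial := by
  rw [intervalIntegral.integral_comp_sub_left (fun t => t ^ n / n.factorial),
    intervalIntegral.integral_div, integral_pow, Nat.factorial_succ]
  push_cast
  field_simp
  simp

theorem prodMk_preimage_cornerSimplex_succ (n : ℕ) (c t : ℝ) :
    Prod.mk t ⁻¹' ((MeasurableEquiv.piFinSuccAbove (fun _ => ℝ) 0).symm ⁻¹'
      cornerSimplex (Fin (n + 1)) c) = {y | 0 ≤ t ∧ y ∈ cornerSimplex (Fin n) (c - t)} := by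
  ext y
  simp [cornerSimplex, MeasurableEquiv.piFinSuccAbove_symm_apply, and_assoc,
    Fin.forall_fin_succ, Fin.sum_univ_succ, le_sub_iff_add_le']

theorem volume_cornerSimplex (n : ℕ) {c : ℝ} (hc : 0 ≤ c) :
    volume (cornerSimplex (Fin n) c) = ENNReal.ofReal (c ^ n / n.factorial) := by
  induction n generalizing c with
  | zero => simp [cornerSimplex, hc, volume_pi]
  | succ n ih =>
    have hslice (t : ℝ) : volume {y | 0 ≤ t ∧ y ∈ cornerSimplex (Fin n) (c - t)} =
        (Icc 0 c).indicator (fun t => ENNReal.ofReal ((c - t) ^ n / n.factorial)) t := by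
      by_cases ht : t ∈ Icc 0 c
      · simp [indicator_of_mem ht, ht.1, ih (sub_nonneg.2 ht.2)]
      · rcases not_and_or.1 ht with ht | ht
        · simp [ht]
        · simp [cornerSimplex_eq_empty (sub_neg.2 (not_le.1 ht)), indicator_of_notMem, ht]
    let e := MeasurableEquiv.piFinSuccAbove (fun _ : Fin (n + 1) => ℝ) 0
    have hmeas : MeasurableSet (e.symm ⁻¹' cornerSimplex (Fin (n + 1)) c) :=
      e.symm.measurable (isClosed_cornerSimplex c).measurableSet
    rw [← ((volume_preserving_piFinSuccAbove (fun _ => ℝ) 0).symm).measure_preimage_equiv,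
      Measure.volume_eq_prod, Measure.prod_apply hmeas]
    simp only [e, prodMk_preimage_cornerSimplex_succ, hslice]
    rw [lintegral_indicator measurableSet_Icc, ← ofReal_integral_eq_lintegral_ofReal,
      integral_Icc_eq_integral_Ioc, ← intervalIntegral.integral_of_le hc,
      integral_sub_pow_div_factorial]
    · exact (Continuous.integrableOn_Icc (by fun_prop))
    · filter_upwards [ae_restrict_mem measurableSet_Icc] with t ht
      have := sub_nonneg.2 ht.2
      positivity

theorem volume_convexHull_insert_range {n : ℕ} (v : Fin n → ℝ) (w : Fin n → Fin n → ℝ) :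
    volume (convexHull ℝ (insert v (range w))) =
      ENNReal.ofReal (|(Matrix.of fun i j => w j i - v i).det| / n.factorial) := by
  set M : Matrix (Fin n) (Fin n) ℝ := Matrix.of fun i j => w j i - v i
  have himage : insert v (range w) =
      v +ᵥ Matrix.toLin' M '' insert 0 (range fun j => Pi.single j 1) := by
    rw [image_insert_eq, ← range_comp, map_zero, vadd_set_insert, vadd_set_range, vadd_eq_add,
      add_zero]
    congr 2
    ext j i
    simp [M]
  rw [himage, convexHull_vadd, measure_vadd, ← LinearMap.image_convexHull,
    Measure.addHaar_image_linearMap, LinearMap.det_toLin', convexHull_insert_zero_range_single,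
    volume_cornerSimplex n zero_le_one, ← ENNReal.ofReal_mul (abs_nonneg _)]
  simp [div_eq_mul_inv]

section
variable {𝕜 E : Type*} [Field 𝕜] [LinearOrder 𝕜] [IsStrictOrderedRing 𝕜] [AddCommGroup E]
  [Module 𝕜 E]

theorem mem_segment_or_mem_segment {p q m z : E} (hz : z ∈ segment 𝕜 p q)
    (hm : m ∈ segment 𝕜 p q) : z ∈ segment 𝕜 p m ∨ z ∈ segment 𝕜 m q := by
  simp only [mem_segment_iff_wbtw] at *
  have hray : SameRay 𝕜 (z -ᵥ p) (m -ᵥ p) :=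
    hz.sameRay_vsub_left.trans hm.sameRay_vsub_left.symm fun hpq => by
      rw [vsub_eq_zero_iff_eq] at hpq
      subst hpq
      simp_all
  rcases wbtw_total_of_sameRay_vsub_left hray with h | h
  · exact Or.inl h
  · exact Or.inr (hz.trans_left_right h)

theorem convexHull_insert_insert_eq_union {s : Set E} {p q m : E} (hm : m ∈ segment 𝕜 p q)
    (hms : m ∈ convexHull 𝕜 s) :
    convexHull 𝕜 (insert p (insert q s)) =
      convexHull 𝕜 (insert p s) ∪ convexHull 𝕜 (insert q s) := by
  refine Subset.antisymm ?_ (union_subset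
    (convexHull_mono (insert_subset_insert (subset_insert _ _))) (convexHull_mono (subset_insert _ _)))
  have hs : s.Nonempty := convexHull_nonempty_iff.1 ⟨m, hms⟩
  rintro x hx
  rw [insert_eq, insert_eq q, ← union_assoc, ← insert_eq, convexHull_union (insert_nonempty _ _) hs,
    convexHull_pair, mem_convexJoin] at hx
  obtain ⟨z, hz, y, hy, hx⟩ := hx
  have hm' (r : E) : m ∈ convexHull 𝕜 (insert r s) := convexHull_mono (subset_insert _ _) hms
  have hy' (r : E) : y ∈ convexHull 𝕜 (insert r s) := convexHull_mono (subset_insert _ _) hy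
  have hr (r : E) : r ∈ convexHull 𝕜 (insert r s) := subset_convexHull 𝕜 _ (mem_insert r s)
  have hconv (r : E) := convex_convexHull 𝕜 (insert r s)
  rcases mem_segment_or_mem_segment hz hm with hz | hz
  · exact Or.inl ((hconv p).segment_subset ((hconv p).segment_subset (hr p) (hm' p) hz) (hy' p) hx)
  · exact Or.inr ((hconv q).segment_subset ((hconv q).segment_subset (hm' q) (hr q) hz) (hy' q) hx)
end

theorem addHaar_setOf_eq_eq_zero {E : Type*} [NormedAddCommGroup E] [NormedSpace ℝ E]
    [MeasurableSpace E] [BorelSpace E] [FiniteDimensional ℝ E] (μ : Measure E)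
    [μ.IsAddHaarMeasure] {f : E →ₗ[ℝ] ℝ} (hf : f ≠ 0) (c : ℝ) : μ {x | f x = c} = 0 := by
  obtain ⟨p, rfl⟩ := f.surjective_of_ne_zero hf c
  have hker : {x | f x = f p} = AffineSubspace.mk' p (LinearMap.ker f) := by
    ext x
    simp [AffineSubspace.mem_mk', sub_eq_zero]
  rw [hker]
  refine Measure.addHaar_affineSubspace μ _ fun htop => hf ?_
  rw [← LinearMap.ker_eq_top, ← AffineSubspace.direction_mk' p (LinearMap.ker f), htop,
    AffineSubspace.direction_top]

theorem addHaar_convexHull_union_of_separated {E : Type*} [NormedAddCommGroup E]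
    [NormedSpace ℝ E] [MeasurableSpace E] [BorelSpace E] [FiniteDimensional ℝ E] (μ : Measure E)
    [μ.IsAddHaarMeasure] {f : E →ₗ[ℝ] ℝ} (hf : f ≠ 0) {s t : Set E} (ht : t.Finite) {c : ℝ}
    (hsc : ∀ x ∈ s, c ≤ f x) (htc : ∀ x ∈ t, f x ≤ c) :
    μ (convexHull ℝ s ∪ convexHull ℝ t) = μ (convexHull ℝ s) + μ (convexHull ℝ t) := by
  have hs : convexHull ℝ s ⊆ {x | c ≤ f x} := convexHull_min hsc (convex_halfSpace_ge f.isLinear c)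
  have ht' : convexHull ℝ t ⊆ {x | f x ≤ c} := convexHull_min htc (convex_halfSpace_le f.isLinear c)
  refine measure_union₀ (ht.isCompact_convexHull ℝ).isClosed.measurableSet.nullMeasurableSet ?_
  exact measure_mono_null (fun x hx => le_antisymm (ht' hx.2) (hs hx.1))
    (addHaar_setOf_eq_eq_zero μ hf c)

/-- The vertices vⁱ of 𝒬 are the points `P x₁ x₂ x₃` of the graph of `x₁ x₂ x₃` at corners
of the box `∏ [aᵢ, bᵢ]`. -/
def trilinearPoint (x₁ x₂ x₃ : ℝ) : Fin 4 → ℝ := ![x₁ * x₂ * x₃, x₁, x₂, x₃]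

local notation "P" => trilinearPoint

section
variable {a₁ b₁ a₂ b₂ a₃ b₃ : ℝ}

theorem volume_convexHull_insert_trilinearPoint {p : Fin 4 → ℝ}
    (hp : p = P a₁ b₂ a₃ ∨ p = P b₁ a₂ b₃) (hab₂ : a₂ ≤ b₂) (hab₃ : a₃ ≤ b₃)
    (h : a₂ * a₃ ≤ b₂ * b₃) :
    volume (convexHull ℝ (insert p {P b₁ a₂ a₃, P a₁ a₂ a₃, P a₁ b₂ b₃, P b₁ b₂ b₃})) =
      ENNReal.ofReal ((b₁ - a₁) ^ 2 * (b₂ - a₂) * (b₃ - a₃) * (b₂ * b₃ - a₂ * a₃) / 24) := by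
  have hdet : |(Matrix.of fun i j =>
      ![P b₁ a₂ a₃, P a₁ a₂ a₃, P a₁ b₂ b₃, P b₁ b₂ b₃] j i - p i).det| =
      (b₁ - a₁) ^ 2 * (b₂ - a₂) * (b₃ - a₃) * (b₂ * b₃ - a₂ * a₃) := by
    have := sub_nonneg.2 h; have := sub_nonneg.2 hab₂; have := sub_nonneg.2 hab₃
    rw [abs_eq (by positivity)]
    rcases hp with rfl | rfl
    · left
      simp [trilinearPoint, Matrix.det_succ_row_zero, Fin.sum_univ_succ, Fin.succAbove]
      ring
    · right
      simp [trilinearPoint, Matrix.det_succ_row_zero, Fin.sum_univ_succ, Fin.succAbove]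
      ring
  have := volume_convexHull_insert_range p ![P b₁ a₂ a₃, P a₁ a₂ a₃, P a₁ b₂ b₃, P b₁ b₂ b₃]
  simp only [Matrix.range_cons, Matrix.range_empty, union_empty, singleton_union, hdet] at this
  rw [this]
  norm_num [Nat.factorial]

theorem midpoint_mem_convexHull_trilinearPoint (hab₁ : a₁ < b₁) (hab₂ : a₂ ≤ b₂)
    (h₁₃ : a₁ * a₃ ≤ b₁ * b₃) (h₂₃ : a₂ * a₃ < b₂ * b₃)
    (hΩ : a₁*b₂*b₃ + b₁*a₂*a₃ ≤ b₁*a₂*b₃ + a₁*b₂*a₃) :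
    midpoint ℝ (P a₁ b₂ a₃) (P b₁ a₂ b₃) ∈
      convexHull ℝ {P b₁ a₂ a₃, P a₁ a₂ a₃, P a₁ b₂ b₃, P b₁ b₂ b₃} := by
  -- matching coordinate 0 (the value of x₁x₂x₃) forces this weight; (Ω) is exactly `t ≤ 1`
  set t := (b₂ - a₂) * (b₁ * b₃ - a₁ * a₃) / ((b₁ - a₁) * (b₂ * b₃ - a₂ * a₃))
  have hden : 0 < (b₁ - a₁) * (b₂ * b₃ - a₂ * a₃) := mul_pos (sub_pos.2 hab₁) (sub_pos.2 h₂₃)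
  have ht₀ : 0 ≤ t := div_nonneg (mul_nonneg (sub_nonneg.2 hab₂) (sub_nonneg.2 h₁₃)) hden.le
  have ht₁ : 0 ≤ 1 - t := sub_nonneg.2 ((div_le_one hden).2 (by linarith))
  have hconv := convex_convexHull ℝ ({P b₁ a₂ a₃, P a₁ a₂ a₃, P a₁ b₂ b₃, P b₁ b₂ b₃} : Set _)
  have hlow := hconv (x := P b₁ a₂ a₃) (y := P a₁ a₂ a₃) (subset_convexHull ℝ _ (by simp))
    (subset_convexHull ℝ _ (by simp)) ht₀ ht₁ (add_sub_cancel t 1)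
  have hup := hconv (x := P a₁ b₂ b₃) (y := P b₁ b₂ b₃) (subset_convexHull ℝ _ (by simp))
    (subset_convexHull ℝ _ (by simp)) ht₀ ht₁ (add_sub_cancel t 1)
  convert hconv.midpoint_mem hlow hup using 1
  have hne₁ : b₁ - a₁ ≠ 0 := (sub_pos.2 hab₁).ne'
  have hne₂₃ : b₂ * b₃ - a₃ * a₂ ≠ 0 := by rw [mul_comm a₃]; exact (sub_pos.2 h₂₃).ne'
  ext k
  fin_cases k <;> simp [midpoint_eq_smul_add, trilinearPoint, t] <;> field_simp <;> ring
end

theorem volume_Q_general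
    (a₁ b₁ a₂ b₂ a₃ b₃ : ℝ)
    (ha₁ : 0 ≤ a₁) (hab₁ : a₁ < b₁)
    (ha₂ : 0 ≤ a₂) (hab₂ : a₂ < b₂)
    (ha₃ : 0 ≤ a₃) (hab₃ : a₃ < b₃)
    (hΩ₁ : a₁*b₂*b₃ + b₁*a₂*a₃ ≤ b₁*a₂*b₃ + a₁*b₂*a₃) :
    volume (convexHull ℝ
      ({![b₁*a₂*a₃, b₁, a₂, a₃], ![a₁*a₂*a₃, a₁, a₂, a₃], ![a₁*b₂*a₃, a₁, b₂, a₃],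
        ![a₁*b₂*b₃, a₁, b₂, b₃], ![b₁*b₂*b₃, b₁, b₂, b₃],
        ![b₁*a₂*b₃, b₁, a₂, b₃]} : Set (Fin 4 → ℝ)))
      = ENNReal.ofReal
          ((b₁-a₁)^2*(b₂-a₂)*(b₃-a₃)*(b₂*b₃-a₂*a₃) / 12) := by
  have h₁₃ : a₁ * a₃ ≤ b₁ * b₃ := mul_le_mul hab₁.le hab₃.le ha₃ (ha₁.trans hab₁.le)
  have h₂₃ : a₂ * a₃ < b₂ * b₃ := mul_lt_mul'' hab₂ hab₃ ha₂ ha₃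
  set S : Set (Fin 4 → ℝ) := {P b₁ a₂ a₃, P a₁ a₂ a₃, P a₁ b₂ b₃, P b₁ b₂ b₃}
  have hQ : ({P b₁ a₂ a₃, P a₁ a₂ a₃, P a₁ b₂ a₃, P a₁ b₂ b₃, P b₁ b₂ b₃, P b₁ a₂ b₃} : Set _) =
      insert (P a₁ b₂ a₃) (insert (P b₁ a₂ b₃) S) := by
    ext x
    simp only [S, mem_insert_iff, mem_singleton_iff]
    tauto
  -- the hyperplane `f = f v²` passes through v¹, v², v⁵, v⁶
  let f : (Fin 4 → ℝ) →ₗ[ℝ] ℝ := (b₃ - a₃) • LinearMap.proj 2 - (b₂ - a₂) • LinearMap.proj 3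
  have hf : f ≠ 0 := fun h => by
    simpa [f, sub_eq_zero, hab₃.ne'] using LinearMap.congr_fun h (Pi.single 2 1)
  have hv₄ : ∀ x ∈ insert (P a₁ b₂ a₃) S, f (P a₁ a₂ a₃) ≤ f x := by
    simp only [trilinearPoint, mem_insert_iff, mem_singleton_iff, Fin.isValue, LinearMap.sub_apply,
      LinearMap.smul_apply, LinearMap.coe_proj, Function.eval, Matrix.cons_val, smul_eq_mul,
      forall_eq_or_imp, forall_eq, S, f]
    refine ⟨?_, ?_, ?_, ?_, ?_⟩ <;> nlinarith
  have hv₈ : ∀ x ∈ insert (P b₁ a₂ b₃) S, f x ≤ f (P a₁ a₂ a₃) := by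
    simp only [trilinearPoint, mem_insert_iff, mem_singleton_iff, Fin.isValue, LinearMap.sub_apply,
      LinearMap.smul_apply, LinearMap.coe_proj, Function.eval, Matrix.cons_val, smul_eq_mul,
      forall_eq_or_imp, forall_eq, S, f]
    refine ⟨?_, ?_, ?_, ?_, ?_⟩ <;> nlinarith
  show volume (convexHull ℝ
    {P b₁ a₂ a₃, P a₁ a₂ a₃, P a₁ b₂ a₃, P a₁ b₂ b₃, P b₁ b₂ b₃, P b₁ a₂ b₃}) = _
  rw [hQ, convexHull_insert_insert_eq_union (midpoint_mem_segment _ _)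
      (midpoint_mem_convexHull_trilinearPoint hab₁ hab₂.le h₁₃ h₂₃ hΩ₁),
    addHaar_convexHull_union_of_separated volume hf (toFinite _) hv₄ hv₈,
    volume_convexHull_insert_trilinearPoint (Or.inl rfl) hab₂.le hab₃.le h₂₃.le,
    volume_convexHull_insert_trilinearPoint (Or.inr rfl) hab₂.le hab₃.le h₂₃.le,
    ← ENNReal.ofReal_add (by positivity) (by positivity)]
  ring_nf

/-- The 4-dimensional volume of `𝒬 = conv{v¹, v², v⁴, v⁵, v⁶, v⁸}`
used in the triangulation of the trilinear hull by Speakman–Lee. -/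
theorem volume_Q
    (a₁ b₁ a₂ b₂ a₃ b₃ : ℝ)
    (ha₁ : 0 ≤ a₁) (hab₁ : a₁ < b₁)
    (ha₂ : 0 ≤ a₂) (hab₂ : a₂ < b₂)
    (ha₃ : 0 ≤ a₃) (hab₃ : a₃ < b₃)
    (hΩ₁ : a₁*b₂*b₃ + b₁*a₂*a₃ ≤ b₁*a₂*b₃ + a₁*b₂*a₃)
    (hΩ₂ : b₁*a₂*b₃ + a₁*b₂*a₃ ≤ b₁*b₂*a₃ + a₁*a₂*b₃) :
    volume (convexHull ℝ
      ({![b₁*a₂*a₃, b₁, a₂, a₃], ![a₁*a₂*a₃, a₁, a₂, a₃], ![a₁*b₂*a₃, a₁, b₂, a₃],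
        ![a₁*b₂*b₃, a₁, b₂, b₃], ![b₁*b₂*b₃, b₁, b₂, b₃],
        ![b₁*a₂*b₃, b₁, a₂, b₃]} : Set (Fin 4 → ℝ)))
      = ENNReal.ofReal
          ((b₁-a₁)^2*(b₂-a₂)*(b₃-a₃)*(b₂*b₃-a₂*a₃) / 12) :=
  volume_Q_general a₁ b₁ a₂ b₂ a₃ b₃ ha₁ hab₁ ha₂ hab₂ ha₃ hab₃ hΩ₁
end

section
/- Let a₁,b₁,a₂,b₂,a₃,b₃ be real parameters with 0 ≤ aᵢ < bᵢ for i = 1,2,3 satisfying the ordering condition (Ω). Then the midpoint of the segment between v³ = (a₁a₂b₃, a₁, a₂, b₃) and v⁷ = (b₁b₂a₃, b₁, b₂, a₃), namely the point ((a₁a₂b₃ + b₁b₂a₃)/2, (a₁+b₁)/2, (a₂+b₂)/2, (a₃+b₃)/2), belongs to 𝒬 := conv{v¹, v², v⁴, v⁵, v⁶, v⁸}. -/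
/-! The target point and the midpoints of `v⁴v⁸` and `v²v⁶` agree in the last three coordinates,
so it suffices that the first coordinate of the target lies between theirs. The lower bound
`b₁a₂b₃ + a₁b₂a₃ ≤ a₁a₂b₃ + b₁b₂a₃` is the second inequality of (Ω); the upper bound is
`(a₁a₂a₃ + b₁b₂b₃) - (a₁a₂b₃ + b₁b₂a₃) = (b₃ - a₃)(b₁b₂ - a₁a₂) ≥ 0`. -/

open Matrix

theorem Convex.vecCons_preimage {𝕜 : Type*} [Semiring 𝕜] [PartialOrder 𝕜] {n : ℕ}
    {s : Set (Fin (n + 1) → 𝕜)} (hs : Convex 𝕜 s) (y : Fin n → 𝕜) :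
    Convex 𝕜 {f : 𝕜 | vecCons f y ∈ s} := by
  intro f hf g hg a b ha hb hab
  have h := hs hf hg ha hb hab
  rwa [smul_cons, smul_cons, cons_add_cons, Convex.combo_self hab] at h

theorem Convex.vecCons_mem_of_mem_Icc {𝕜 : Type*} [Field 𝕜] [LinearOrder 𝕜]
    [IsStrictOrderedRing 𝕜] {n : ℕ} {s : Set (Fin (n + 1) → 𝕜)} (hs : Convex 𝕜 s)
    {y : Fin n → 𝕜} {f₁ f₂ f : 𝕜} (h₁ : vecCons f₁ y ∈ s) (h₂ : vecCons f₂ y ∈ s)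
    (hf : f ∈ Set.Icc f₁ f₂) : vecCons f y ∈ s :=
  (hs.vecCons_preimage y).ordConnected.out h₁ h₂ hf

theorem midpoint_v3_v7_mem_Q_general
    (a₁ b₁ a₂ b₂ a₃ b₃ : ℝ)
    (ha₁ : 0 ≤ a₁) (hab₁ : a₁ < b₁)
    (ha₂ : 0 ≤ a₂) (hab₂ : a₂ < b₂)
    (hab₃ : a₃ < b₃)
    (hΩ₂ : b₁*a₂*b₃ + a₁*b₂*a₃ ≤ b₁*b₂*a₃ + a₁*a₂*b₃) :
    (![(a₁*a₂*b₃ + b₁*b₂*a₃)/2, (a₁+b₁)/2, (a₂+b₂)/2, (a₃+b₃)/2] : Fin 4 → ℝ)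
      ∈ convexHull ℝ
        ({![b₁*a₂*a₃, b₁, a₂, a₃], ![a₁*a₂*a₃, a₁, a₂, a₃], ![a₁*b₂*a₃, a₁, b₂, a₃],
          ![a₁*b₂*b₃, a₁, b₂, b₃], ![b₁*b₂*b₃, b₁, b₂, b₃],
          ![b₁*a₂*b₃, b₁, a₂, b₃]} : Set (Fin 4 → ℝ)) := by
  set S : Set (Fin 4 → ℝ) :=
    {![b₁*a₂*a₃, b₁, a₂, a₃], ![a₁*a₂*a₃, a₁, a₂, a₃], ![a₁*b₂*a₃, a₁, b₂, a₃],
      ![a₁*b₂*b₃, a₁, b₂, b₃], ![b₁*b₂*b₃, b₁, b₂, b₃], ![b₁*a₂*b₃, b₁, a₂, b₃]}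
  have hconv := convex_convexHull ℝ S
  have midpoint_mem {u w : Fin 4 → ℝ} (hu : u ∈ S) (hw : w ∈ S) :
      midpoint ℝ u w ∈ convexHull ℝ S :=
    hconv.midpoint_mem (subset_convexHull ℝ S hu) (subset_convexHull ℝ S hw)
  have mid_v4_v8 : midpoint ℝ ![a₁*b₂*a₃, a₁, b₂, a₃] ![b₁*a₂*b₃, b₁, a₂, b₃]
      = ![(b₁*a₂*b₃ + a₁*b₂*a₃)/2, (a₁+b₁)/2, (a₂+b₂)/2, (a₃+b₃)/2] := by
    ext i; fin_cases i <;> simp [midpoint_eq_smul_add] <;> ring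
  have mid_v2_v6 : midpoint ℝ ![a₁*a₂*a₃, a₁, a₂, a₃] ![b₁*b₂*b₃, b₁, b₂, b₃]
      = ![(a₁*a₂*a₃ + b₁*b₂*b₃)/2, (a₁+b₁)/2, (a₂+b₂)/2, (a₃+b₃)/2] := by
    ext i; fin_cases i <;> simp [midpoint_eq_smul_add] <;> ring
  have hprod : a₁*a₂ ≤ b₁*b₂ := mul_le_mul hab₁.le hab₂.le ha₂ (ha₁.trans hab₁.le)
  refine hconv.vecCons_mem_of_mem_Icc (mid_v4_v8 ▸ midpoint_mem (by simp [S]) (by simp [S]))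
    (mid_v2_v6 ▸ midpoint_mem (by simp [S]) (by simp [S])) ⟨by linarith, ?_⟩
  nlinarith [mul_le_mul_of_nonneg_left hprod (sub_nonneg.2 hab₃.le)]

/-- The midpoint of the segment between `v³` and `v⁷` belongs to
`𝒬 = conv{v¹, v², v⁴, v⁵, v⁶, v⁸}` (Speakman–Lee, proof of Theorem 1). -/
theorem midpoint_v3_v7_mem_Q
    (a₁ b₁ a₂ b₂ a₃ b₃ : ℝ)
    (ha₁ : 0 ≤ a₁) (hab₁ : a₁ < b₁)
    (ha₂ : 0 ≤ a₂) (hab₂ : a₂ < b₂)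
    (ha₃ : 0 ≤ a₃) (hab₃ : a₃ < b₃)
    (hΩ₁ : a₁*b₂*b₃ + b₁*a₂*a₃ ≤ b₁*a₂*b₃ + a₁*b₂*a₃)
    (hΩ₂ : b₁*a₂*b₃ + a₁*b₂*a₃ ≤ b₁*b₂*a₃ + a₁*a₂*b₃) :
    (![(a₁*a₂*b₃ + b₁*b₂*a₃)/2, (a₁+b₁)/2, (a₂+b₂)/2, (a₃+b₃)/2] : Fin 4 → ℝ)
      ∈ convexHull ℝ
        ({![b₁*a₂*a₃, b₁, a₂, a₃], ![a₁*a₂*a₃, a₁, a₂, a₃], ![a₁*b₂*a₃, a₁, b₂, a₃],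
          ![a₁*b₂*b₃, a₁, b₂, b₃], ![b₁*b₂*b₃, b₁, b₂, b₃],
          ![b₁*a₂*b₃, b₁, a₂, b₃]} : Set (Fin 4 → ℝ)) :=
  midpoint_v3_v7_mem_Q_general a₁ b₁ a₂ b₂ a₃ b₃ ha₁ hab₁ ha₂ hab₂ hab₃ hΩ₂
end

section
/- Let a₁,b₁,a₂,b₂,a₃,b₃ be real parameters with 0 < aᵢ < bᵢ for i = 1,2,3 satisfying the ordering condition (Ω). Then −a₁²a₂²a₃ + a₁²a₂b₂b₃ + a₁a₂²b₁b₃ + 3a₁a₂a₃b₁b₂ − 3a₁a₂b₁b₂b₃ − a₁a₃b₁b₂² − a₂a₃b₁²b₂ + b₁²b₂²b₃ ≥ 0. -/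
/-! The numerator is a sum of two visibly nonnegative products: `(b₃ - a₃)` times the positive
quadratic form `(b₁b₂ - a₁a₂)² + a₂b₂(b₁ - a₁)²`, plus `b₁b₂ - a₁a₂` times the slack of the
second inequality of (Ω). -/

theorem numerator_v311_ineq9_eq {R : Type*} [CommRing R] (a₁ b₁ a₂ b₂ a₃ b₃ : R) :
    -a₁^2*a₂^2*a₃ + a₁^2*a₂*b₂*b₃ + a₁*a₂^2*b₁*b₃ + 3*a₁*a₂*a₃*b₁*b₂
      - 3*a₁*a₂*b₁*b₂*b₃ - a₁*a₃*b₁*b₂^2 - a₂*a₃*b₁^2*b₂ + b₁^2*b₂^2*b₃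
      = (b₃ - a₃) * ((b₁*b₂ - a₁*a₂)^2 + a₂*b₂*(b₁ - a₁)^2)
        + (b₁*b₂ - a₁*a₂) * ((b₁*b₂*a₃ + a₁*a₂*b₃) - (b₁*a₂*b₃ + a₁*b₂*a₃)) := by
  ring

theorem numerator_nonneg_v311_ineq9_general
    (a₁ b₁ a₂ b₂ a₃ b₃ : ℝ)
    (ha₁ : 0 < a₁) (hab₁ : a₁ < b₁)
    (ha₂ : 0 < a₂) (hab₂ : a₂ < b₂)
    (hab₃ : a₃ < b₃)
    (hΩ₂ : b₁*a₂*b₃ + a₁*b₂*a₃ ≤ b₁*b₂*a₃ + a₁*a₂*b₃) :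
    -a₁^2*a₂^2*a₃ + a₁^2*a₂*b₂*b₃ + a₁*a₂^2*b₁*b₃ + 3*a₁*a₂*a₃*b₁*b₂
      - 3*a₁*a₂*b₁*b₂*b₃ - a₁*a₃*b₁*b₂^2 - a₂*a₃*b₁^2*b₂ + b₁^2*b₂^2*b₃ ≥ 0 := by
  rw [ge_iff_le, numerator_v311_ineq9_eq]
  have hprod : a₁*a₂ ≤ b₁*b₂ := mul_le_mul hab₁.le hab₂.le ha₂.le (ha₁.trans hab₁).le
  have hform : 0 ≤ (b₁*b₂ - a₁*a₂)^2 + a₂*b₂*(b₁ - a₁)^2 := by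
    have : 0 ≤ a₂*b₂ := mul_nonneg ha₂.le (ha₂.trans hab₂).le
    positivity
  exact add_nonneg (mul_nonneg (sub_nonneg.2 hab₃.le) hform)
    (mul_nonneg (sub_nonneg.2 hprod) (sub_nonneg.2 hΩ₂))

/-- Nonnegativity of the numerator obtained when substituting the extreme point
`v₃¹¹` of `𝒫₃` into the hull facet inequality
`−f + a₂a₃x₁ + b₁b₃x₂ + b₁a₂x₃ − b₁a₂b₃ − b₁a₂a₃ ≥ 0` (Speakman–Lee, §9.4). -/
theorem numerator_nonneg_v311_ineq9
    (a₁ b₁ a₂ b₂ a₃ b₃ : ℝ)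
    (ha₁ : 0 < a₁) (hab₁ : a₁ < b₁)
    (ha₂ : 0 < a₂) (hab₂ : a₂ < b₂)
    (ha₃ : 0 < a₃) (hab₃ : a₃ < b₃)
    (hΩ₁ : a₁*b₂*b₃ + b₁*a₂*a₃ ≤ b₁*a₂*b₃ + a₁*b₂*a₃)
    (hΩ₂ : b₁*a₂*b₃ + a₁*b₂*a₃ ≤ b₁*b₂*a₃ + a₁*a₂*b₃) :
    -a₁^2*a₂^2*a₃ + a₁^2*a₂*b₂*b₃ + a₁*a₂^2*b₁*b₃ + 3*a₁*a₂*a₃*b₁*b₂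
      - 3*a₁*a₂*b₁*b₂*b₃ - a₁*a₃*b₁*b₂^2 - a₂*a₃*b₁^2*b₂ + b₁^2*b₂^2*b₃ ≥ 0 :=
  numerator_nonneg_v311_ineq9_general a₁ b₁ a₂ b₂ a₃ b₃ ha₁ hab₁ ha₂ hab₂ hab₃ hΩ₂
end
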